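/- For any orchard network N on X ⊆ [n], the number of ordered reducible pairs (i,j) with i < j or (i,j) a reticulated cherry (i.e., counting each unordered cherry once) is at most (2/3)|X|. -/
import Mathlib


/-- A directed graph with node set `V ⊆ ℕ` and arc set `A`.  Leaves are
identified with their taxon labels (natural numbers). -/
structure Net where
  V : Finset ℕ
  A : Finset (ℕ × ℕ)

namespace Net

def indeg (N : Net) (v : ℕ) : ℕ := (N.A.filter (fun a => a.2 = v)).card
def outdeg (N : Net) (v : ℕ) : ℕ := (N.A.filter (fun a => a.1 = v)).card

def isLeaf (N : Net) (v : ℕ) : Prop := v ∈ N.V ∧ N.indeg v = 1 ∧ N.outdeg v = 0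
def isRoot (N : Net) (v : ℕ) : Prop := v ∈ N.V ∧ N.indeg v = 0 ∧ N.outdeg v = 1
def isTreeNode (N : Net) (v : ℕ) : Prop := v ∈ N.V ∧ N.indeg v = 1 ∧ N.outdeg v = 2
def isRetic (N : Net) (v : ℕ) : Prop := v ∈ N.V ∧ N.indeg v = 2 ∧ N.outdeg v = 1

/-- The set of leaves (= taxa) of a network. -/
def leaves (N : Net) : Finset ℕ := N.V.filter (fun v => N.indeg v = 1 ∧ N.outdeg v = 0)

/-- Number of reticulation nodes. -/
def numRetic (N : Net) : ℕ := (N.V.filter (fun v => N.indeg v = 2 ∧ N.outdeg v = 1)).card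

/-- `N` is a rooted binary phylogenetic network: arcs join nodes, it is acyclic,
has a unique root, and every node is a root, leaf, tree node or reticulation. -/
def isPhylo (N : Net) : Prop :=
  (∀ a ∈ N.A, a.1 ∈ N.V ∧ a.2 ∈ N.V) ∧
  (∀ v, ¬ Relation.TransGen (fun u w => (u, w) ∈ N.A) v v) ∧
  (∃! r, N.isRoot r) ∧
  (∀ v ∈ N.V, N.isRoot v ∨ N.isLeaf v ∨ N.isTreeNode v ∨ N.isRetic v)

/-- `(i,j)` is a cherry: `i ≠ j` are leaves with a common parent. -/
def isCherry (N : Net) (i j : ℕ) : Prop :=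
  i ≠ j ∧ N.isLeaf i ∧ N.isLeaf j ∧ ∃ p, (p, i) ∈ N.A ∧ (p, j) ∈ N.A

/-- `(i,j)` is a reticulated cherry: the parent of `i` is a reticulation,
the parent of `j` is a tree node and a parent of the parent of `i`. -/
def isRetCherry (N : Net) (i j : ℕ) : Prop :=
  i ≠ j ∧ N.isLeaf i ∧ N.isLeaf j ∧
    ∃ pi pj, (pi, i) ∈ N.A ∧ (pj, j) ∈ N.A ∧
      N.isRetic pi ∧ N.isTreeNode pj ∧ (pj, pi) ∈ N.A

/-- `(i,j)` is a reducible pair. -/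
def Reducible (N : Net) (s : ℕ × ℕ) : Prop := N.isCherry s.1 s.2 ∨ N.isRetCherry s.1 s.2

end Net

/-- The reduction of a cherry `(i,j)`: delete leaf `i` and simplify the
(now elementary) common parent `p`, whose parent is `g`. -/
def CherryReduce (N : Net) (i j : ℕ) (N' : Net) : Prop :=
  ∃ p g, (p, i) ∈ N.A ∧ (p, j) ∈ N.A ∧ (g, p) ∈ N.A ∧
    N'.V = (N.V.erase i).erase p ∧
    N'.A = (N.A \ {(p, i), (p, j), (g, p)}) ∪ {(g, j)}

/-- The reduction of a reticulated cherry `(i,j)`: delete the arc from the parent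
`pj` of `j` to the parent `pi` of `i`, and simplify the two elementary nodes. -/
def RetCherryReduce (N : Net) (i j : ℕ) (N' : Net) : Prop :=
  ∃ pi pj q g, (pi, i) ∈ N.A ∧ (pj, j) ∈ N.A ∧ (pj, pi) ∈ N.A ∧
    (q, pi) ∈ N.A ∧ q ≠ pj ∧ (g, pj) ∈ N.A ∧
    N'.V = (N.V.erase pi).erase pj ∧
    N'.A = (N.A \ {(pj, pi), (q, pi), (pi, i), (g, pj), (pj, j)}) ∪ {(q, i), (g, j)}

/-- `N'` is the reduction `N^{(i,j)}` of the reducible pair `s = (i,j)` in `N`. -/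
def Reduces (N : Net) (s : ℕ × ℕ) (N' : Net) : Prop :=
  (N.isCherry s.1 s.2 ∧ CherryReduce N s.1 s.2 N') ∨
  (N.isRetCherry s.1 s.2 ∧ RetCherryReduce N s.1 s.2 N')

/-- `N'` is the result of reducing in `N` the pairs of the sequence `S`, from left to right. -/
inductive ReducesSeq : Net → List (ℕ × ℕ) → Net → Prop
  | nil (N : Net) : ReducesSeq N [] N
  | cons {N M N' : Net} {s : ℕ × ℕ} {S : List (ℕ × ℕ)} :
      Reduces N s M → ReducesSeq M S N' → ReducesSeq N (s :: S) N'

/-- `N` is the trivial network `I l` (a root and the leaf `l`). -/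
def isTrivial (N : Net) (l : ℕ) : Prop :=
  ∃ r, r ≠ l ∧ N.V = {r, l} ∧ N.A = {(r, l)}

/-- `S` is a complete reducible sequence for `N`. -/
def CompleteRS (N : Net) (S : List (ℕ × ℕ)) : Prop :=
  ∃ N' l, ReducesSeq N S N' ∧ isTrivial N' l

/-- `N` is an orchard network. -/
def Net.isOrchard (N : Net) : Prop := N.isPhylo ∧ ∃ S, CompleteRS N S

/-- Isomorphism of networks: an arc-preserving and arc-reflecting bijection
of the nodes which is the identity on the leaves. -/
def NetIso (N N' : Net) : Prop :=
  ∃ φ : ℕ → ℕ, Set.BijOn φ ↑N.V ↑N'.V ∧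
    (∀ u ∈ N.V, ∀ v ∈ N.V, ((u, v) ∈ N.A ↔ (φ u, φ v) ∈ N'.A)) ∧
    ∀ l ∈ N.leaves, φ l = l

/-- Augmentation of `(i,j)` when `i` is a new taxon: create a new leaf `i`,
subdivide the arc `(q,j)` into `j` with a new node `p`, and add the arc `(p,i)`. -/
def CherryAug (N : Net) (i j : ℕ) (N' : Net) : Prop :=
  ∃ q p, (q, j) ∈ N.A ∧ i ∉ N.V ∧ p ∉ N.V ∧ p ≠ i ∧
    N'.V = insert i (insert p N.V) ∧
    N'.A = (N.A.erase (q, j)) ∪ {(q, p), (p, j), (p, i)}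

/-- Augmentation of `(i,j)` when `i` is already a leaf: subdivide the arcs into
`i` and `j` with new nodes `pi`, `pj` and add the arc `(pj, pi)`. -/
def RetAug (N : Net) (i j : ℕ) (N' : Net) : Prop :=
  ∃ qi qj pi pj, (qi, i) ∈ N.A ∧ (qj, j) ∈ N.A ∧
    pi ∉ N.V ∧ pj ∉ N.V ∧ pi ≠ pj ∧
    N'.V = insert pi (insert pj N.V) ∧
    N'.A = ((N.A.erase (qi, i)).erase (qj, j)) ∪
      {(qi, pi), (pi, i), (qj, pj), (pj, j), (pj, pi)}

/-- `N'` is the augmentation `^{(i,j)}N` of the pair `s = (i,j)` in `N`. -/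
def Augments (N : Net) (s : ℕ × ℕ) (N' : Net) : Prop :=
  s.1 ≠ s.2 ∧ N.isLeaf s.2 ∧
    ((s.1 ∉ N.leaves ∧ CherryAug N s.1 s.2 N') ∨
     (s.1 ∈ N.leaves ∧ RetAug N s.1 s.2 N'))

/-- The total order on pairs: `(i,j) ≤ (i',j')` iff `i < i'` or (`i = i'` and `j ≤ j'`). -/
def pairLE (p q : ℕ × ℕ) : Prop := p.1 < q.1 ∨ (p.1 = q.1 ∧ p.2 ≤ q.2)

/-- Strict version of `pairLE`. -/
def pairLT (p q : ℕ × ℕ) : Prop := p.1 < q.1 ∨ (p.1 = q.1 ∧ p.2 < q.2)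

/-- Lexicographic order on sequences of pairs (of the same length). -/
def seqLE : List (ℕ × ℕ) → List (ℕ × ℕ) → Prop
  | [], [] => True
  | p :: S, q :: S' => pairLT p q ∨ (p = q ∧ seqLE S S')
  | _, _ => False

/-- `s` is the minimum reducible pair of `N`. -/
def isMRP (N : Net) (s : ℕ × ℕ) : Prop :=
  N.Reducible s ∧ ∀ t, N.Reducible t → pairLE s t

/-- `S` is the minimum complete reducible sequence of `N`. -/
def isMCRS (N : Net) (S : List (ℕ × ℕ)) : Prop :=
  CompleteRS N S ∧ ∀ S', CompleteRS N S' → seqLE S S'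

/-- `N` is (isomorphic to) the network `^S I` generated by applying the
augmentations of `S`, from right to left, to a trivial network. -/
inductive Generates : List (ℕ × ℕ) → Net → Prop
  | triv {N : Net} {l : ℕ} : isTrivial N l → Generates [] N
  | cons {s : ℕ × ℕ} {S : List (ℕ × ℕ)} {N N' : Net} :
      Generates S N → Augments N s N' → Generates (s :: S) N'

/-- `S` is a minimum augmentation sequence: `S = MCRS(^S I)`. -/
def isMinAugSeq (S : List (ℕ × ℕ)) : Prop :=
  ∃ N, Generates S N ∧ isMCRS N S

/-- `N` is tree-child: every internal node has a child that is not a reticulation. -/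
def Net.isTreeChild (N : Net) : Prop :=
  ∀ v ∈ N.V, ¬ N.isLeaf v → ∃ c, (v, c) ∈ N.A ∧ ¬ N.isRetic c

/-- The possible states of a taxon in a network. -/
inductive LState | sN | sP | sS | sT
deriving DecidableEq

open Classical in
/-- The state `σ_N(i)` of a taxon `i`: `sN` if `i` is not a leaf of `N`; otherwise
`sP` if its parent is a reticulation; otherwise `sS` if its sibling is a
reticulation; otherwise `sT`. -/
noncomputable def state (N : Net) (i : ℕ) : LState :=
  if ¬ N.isLeaf i then .sN
  else if ∃ p, (p, i) ∈ N.A ∧ N.isRetic p then .sP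
  else if ∃ p s, (p, i) ∈ N.A ∧ (p, s) ∈ N.A ∧ s ≠ i ∧ N.isRetic s then .sS
  else .sT

namespace ARPAux

variable {N : Net}

open Classical in
/-- Charge of pair `p` at leaf `l`. -/
noncomputable def charge (N : Net) (p : ℕ × ℕ) (l : ℕ) : ℕ :=
  if N.isCherry p.1 p.2 then (if l = p.1 ∨ l = p.2 then 3 else 0)
  else if l = p.1 then 2 else if l = p.2 then 4 else 0

lemma charge_le (N : Net) (p : ℕ × ℕ) (l : ℕ) : charge N p l ≤ 4 := by
  unfold charge; split_ifs <;> omega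

lemma mem_leaves_iff {l : ℕ} : l ∈ N.leaves ↔ N.isLeaf l := by
  simp [Net.leaves, Net.isLeaf, Finset.mem_filter]

lemma parent_eq {l p q : ℕ} (h : N.indeg l = 1) (h1 : (p, l) ∈ N.A)
    (h2 : (q, l) ∈ N.A) : p = q := by
  have hc : (N.A.filter (fun a => a.2 = l)).card ≤ 1 := h.le
  have := Finset.card_le_one.mp hc (p, l)
    (Finset.mem_filter.mpr ⟨h1, rfl⟩) (q, l) (Finset.mem_filter.mpr ⟨h2, rfl⟩)
  exact (Prod.ext_iff.mp this).1

lemma child_eq {v a b : ℕ} (h : N.outdeg v = 1) (h1 : (v, a) ∈ N.A)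
    (h2 : (v, b) ∈ N.A) : a = b := by
  have hc : (N.A.filter (fun x => x.1 = v)).card ≤ 1 := h.le
  have := Finset.card_le_one.mp hc (v, a)
    (Finset.mem_filter.mpr ⟨h1, rfl⟩) (v, b) (Finset.mem_filter.mpr ⟨h2, rfl⟩)
  exact (Prod.ext_iff.mp this).2

lemma out2 {v a b c : ℕ} (h : N.outdeg v = 2) (ha : (v, a) ∈ N.A)
    (hb : (v, b) ∈ N.A) (hc : (v, c) ∈ N.A) : a = b ∨ a = c ∨ b = c := by
  by_contra hcon
  push_neg at hcon
  obtain ⟨hab, hac, hbc⟩ := hcon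
  have hsub : ({(v, a), (v, b), (v, c)} : Finset (ℕ × ℕ)) ⊆
      N.A.filter (fun x => x.1 = v) := by
    intro x hx
    simp only [Finset.mem_insert, Finset.mem_singleton] at hx
    rcases hx with rfl | rfl | rfl <;> exact Finset.mem_filter.mpr ⟨by assumption, rfl⟩
  have hcard : ({(v, a), (v, b), (v, c)} : Finset (ℕ × ℕ)).card = 3 := by
    rw [Finset.card_insert_of_notMem (by simp [hab, hac]),
      Finset.card_insert_of_notMem (by simp [hbc]), Finset.card_singleton]
  have hle := Finset.card_le_card hsub
  have h2 : (N.A.filter (fun x => x.1 = v)).card = 2 := h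
  omega

lemma in2 {v a b c : ℕ} (h : N.indeg v = 2) (ha : (a, v) ∈ N.A)
    (hb : (b, v) ∈ N.A) (hc : (c, v) ∈ N.A) : a = b ∨ a = c ∨ b = c := by
  by_contra hcon
  push_neg at hcon
  obtain ⟨hab, hac, hbc⟩ := hcon
  have hsub : ({(a, v), (b, v), (c, v)} : Finset (ℕ × ℕ)) ⊆
      N.A.filter (fun x => x.2 = v) := by
    intro x hx
    simp only [Finset.mem_insert, Finset.mem_singleton] at hx
    rcases hx with rfl | rfl | rfl <;> exact Finset.mem_filter.mpr ⟨by assumption, rfl⟩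
  have hcard : ({(a, v), (b, v), (c, v)} : Finset (ℕ × ℕ)).card = 3 := by
    rw [Finset.card_insert_of_notMem (by simp [hab, hac]),
      Finset.card_insert_of_notMem (by simp [hbc]), Finset.card_singleton]
  have hle := Finset.card_le_card hsub
  have h2 : (N.A.filter (fun x => x.2 = v)).card = 2 := h
  omega

lemma leaf_ne_retic {a b : ℕ} (hl : N.isLeaf a) (hr : N.isRetic b) : a ≠ b := by
  intro h; subst h
  have := hl.2.1; have := hr.2.1; omega

/-- The common parent of a cherry has out-degree 2. -/
lemma cherry_out2 (hph : N.isPhylo) {p i j : ℕ} (hij : i ≠ j)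
    (hi : (p, i) ∈ N.A) (hj : (p, j) ∈ N.A) : N.outdeg p = 2 := by
  obtain ⟨harc, -, -, hclass⟩ := hph
  have hpV : p ∈ N.V := (harc _ hi).1
  have h2 : 2 ≤ N.outdeg p := by
    have hsub : ({(p, i), (p, j)} : Finset (ℕ × ℕ)) ⊆
        N.A.filter (fun x => x.1 = p) := by
      intro x hx
      simp only [Finset.mem_insert, Finset.mem_singleton] at hx
      rcases hx with rfl | rfl <;> exact Finset.mem_filter.mpr ⟨by assumption, rfl⟩
    have hcard : ({(p, i), (p, j)} : Finset (ℕ × ℕ)).card = 2 := by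
      rw [Finset.card_insert_of_notMem (by simp [hij]), Finset.card_singleton]
    have hle := Finset.card_le_card hsub
    have : (N.A.filter (fun x => x.1 = p)).card = N.outdeg p := rfl
    omega
  rcases hclass p hpV with h | h | h | h
  · have := h.2.2; omega
  · have := h.2.2; omega
  · exact h.2.2
  · have := h.2.2; omega

lemma not_cherry_and_rc1 (hph : N.isPhylo) {l m j : ℕ} (hc : N.isCherry l m)
    (hr : N.isRetCherry l j) : False := by
  obtain ⟨hlm, hll, hlm', cp, hcl, hcm⟩ := hc
  obtain ⟨-, -, -, pi, pj, hpil, -, hretic, -, -⟩ := hr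
  have hpe : pi = cp := parent_eq hll.2.1 hpil hcl
  have hout : N.outdeg pi = 1 := hretic.2.2
  rw [hpe] at hout
  exact hlm (child_eq hout hcl hcm)

lemma not_cherry_and_rc2 (hph : N.isPhylo) {l m i : ℕ} (hc : N.isCherry l m)
    (hr : N.isRetCherry i l) : False := by
  obtain ⟨hlm, hll, hml, cp, hcl, hcm⟩ := hc
  obtain ⟨-, -, -, pi, pj, -, hpjl, hretic, htree, hpjpi⟩ := hr
  have hpe : pj = cp := parent_eq hll.2.1 hpjl hcl
  rw [hpe] at hpjpi
  have hout : N.outdeg cp = 2 := cherry_out2 hph hlm hcl hcm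
  rcases out2 hout hcl hcm hpjpi with h | h | h
  · exact hlm h
  · exact leaf_ne_retic hll hretic h
  · exact leaf_ne_retic hml hretic h

lemma not_rc1_and_rc2 {l i j : ℕ} (h1 : N.isRetCherry l j)
    (h2 : N.isRetCherry i l) : False := by
  obtain ⟨-, hll, -, pi, -, hpil, -, hretic, -, -⟩ := h1
  obtain ⟨-, -, -, pi', pj, -, hpjl, -, htree, -⟩ := h2
  have hpe : pi = pj := parent_eq hll.2.1 hpil hpjl
  have h1 : N.indeg pi = 2 := hretic.2.1
  have h2 : N.indeg pj = 1 := htree.2.1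
  rw [hpe] at h1; omega

lemma rc_snd_unique (hph : N.isPhylo) {l i i' : ℕ} (h1 : N.isRetCherry i l)
    (h2 : N.isRetCherry i' l) : i = i' := by
  obtain ⟨-, hli, hll, pi, pj, hpii, hpjl, hretic, htree, hpjpi⟩ := h1
  obtain ⟨-, hli', -, pi', pj', hpii', hpjl', hretic', htree', hpjpi'⟩ := h2
  have hpe : pj' = pj := parent_eq hll.2.1 hpjl' hpjl
  rw [hpe] at hpjpi'
  rcases out2 htree.2.2 hpjl hpjpi hpjpi' with h | h | h
  · exact absurd h (leaf_ne_retic hll hretic)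
  · exact absurd h (leaf_ne_retic hll hretic')
  · rw [← h] at hpii'
    exact child_eq hretic.2.2 hpii hpii'

lemma cherry_symm {i j : ℕ} (hc : N.isCherry i j) : N.isCherry j i := by
  obtain ⟨hij, hi, hj, p, h1, h2⟩ := hc
  exact ⟨hij.symm, hj, hi, p, h2, h1⟩

lemma cherry_partner_unique (hph : N.isPhylo) {l m m' : ℕ} (h1 : N.isCherry l m)
    (h2 : N.isCherry l m') : m = m' := by
  obtain ⟨hlm, hll, hml, cp, hcl, hcm⟩ := h1
  obtain ⟨hlm', -, -, cp', hcl', hcm'⟩ := h2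
  have hpe : cp' = cp := parent_eq hll.2.1 hcl' hcl
  rw [hpe] at hcm'
  rcases out2 (cherry_out2 hph hlm hcl hcm) hcl hcm hcm' with h | h | h
  · exact absurd h hlm
  · exact absurd h hlm'
  · exact h

lemma rc_fst_two (hph : N.isPhylo) {l a b c : ℕ} (h1 : N.isRetCherry l a)
    (h2 : N.isRetCherry l b) (h3 : N.isRetCherry l c) : a = b ∨ a = c ∨ b = c := by
  obtain ⟨-, hll, hla, pia, pja, hpa, hja, hra, hta, hjpa⟩ := h1
  obtain ⟨-, -, hlb, pib, pjb, hpb, hjb, hrb, htb, hjpb⟩ := h2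
  obtain ⟨-, -, hlc, pic, pjc, hpc, hjc, hrc, htc, hjpc⟩ := h3
  have heb : pib = pia := parent_eq hll.2.1 hpb hpa
  have hec : pic = pia := parent_eq hll.2.1 hpc hpa
  rw [heb] at hjpb; rw [hec] at hjpc
  have key : ∀ {x y px py : ℕ}, N.isLeaf x → N.isLeaf y → (px, x) ∈ N.A →
      (py, y) ∈ N.A → N.isTreeNode px → (px, pia) ∈ N.A → (py, pia) ∈ N.A →
      px = py → x = y := by
    intro x y px py hx hy hpx hpy htx hpxp hpyp he
    rw [← he] at hpy
    rcases out2 htx.2.2 hpx hpy hpxp with h | h | h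
    · exact h
    · exact absurd h (leaf_ne_retic hx hra)
    · exact absurd h (leaf_ne_retic hy hra)
  rcases in2 hra.2.1 hjpa hjpb hjpc with h | h | h
  · exact Or.inl (key hla hlb hja hjb hta hjpa hjpb h)
  · exact Or.inr (Or.inl (key hla hlc hja hjc hta hjpa hjpc h))
  · exact Or.inr (Or.inr (key hlb hlc hjb hjc htb hjpb hjpc h))

end ARPAux

open Classical in
/-- The number of reducible pairs of an orchard network on `X`, counting each
unordered cherry once, is at most `(2/3)|X|`. -/
theorem arp_card_bound (N : Net) (h : N.isOrchard) :
    3 * ((N.leaves ×ˢ N.leaves).filter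
        (fun p => N.isRetCherry p.1 p.2 ∨ (N.isCherry p.1 p.2 ∧ p.1 < p.2))).card
      ≤ 2 * N.leaves.card := by
  classical
  obtain ⟨hph, -⟩ := h
  set P := (N.leaves ×ˢ N.leaves).filter
      (fun p => N.isRetCherry p.1 p.2 ∨ (N.isCherry p.1 p.2 ∧ p.1 < p.2)) with hPdef
  have hmem : ∀ p ∈ P, p.1 ∈ N.leaves ∧ p.2 ∈ N.leaves ∧ p.1 ≠ p.2 ∧
      (N.isRetCherry p.1 p.2 ∨ (N.isCherry p.1 p.2 ∧ p.1 < p.2)) := by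
    intro p hp
    rw [hPdef, Finset.mem_filter, Finset.mem_product] at hp
    refine ⟨hp.1.1, hp.1.2, ?_, hp.2⟩
    rcases hp.2 with h | h
    · exact h.1
    · exact h.1.1
  have hrow : ∀ p ∈ P, ∑ l ∈ N.leaves, ARPAux.charge N p l = 6 := by
    intro p hp
    obtain ⟨h1, h2, hne, -⟩ := hmem p hp
    have hsub : ({p.1, p.2} : Finset ℕ) ⊆ N.leaves := by
      intro x hx
      simp only [Finset.mem_insert, Finset.mem_singleton] at hx
      rcases hx with rfl | rfl <;> assumption
    have hz : ∀ l ∈ N.leaves, l ∉ ({p.1, p.2} : Finset ℕ) →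
        ARPAux.charge N p l = 0 := by
      intro l _ hl
      simp only [Finset.mem_insert, Finset.mem_singleton, not_or] at hl
      unfold ARPAux.charge
      simp [hl.1, hl.2]
    rw [← Finset.sum_subset hsub hz, Finset.sum_pair hne]
    unfold ARPAux.charge
    by_cases hc : N.isCherry p.1 p.2 <;> simp [hc, hne, hne.symm]
  have hcol : ∀ l ∈ N.leaves, ∑ p ∈ P, ARPAux.charge N p l ≤ 4 := by
    intro l hl
    have hleaf : N.isLeaf l := ARPAux.mem_leaves_iff.mp hl
    set T := P.filter (fun p => l = p.1 ∨ l = p.2) with hT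
    have hsum : ∑ p ∈ T, ARPAux.charge N p l = ∑ p ∈ P, ARPAux.charge N p l := by
      rw [hT]
      refine Finset.sum_filter_of_ne ?_
      intro p hp hne0
      by_contra hcon
      push_neg at hcon
      unfold ARPAux.charge at hne0
      simp [hcon.1, hcon.2] at hne0
    rw [← hsum]
    have hTmem : ∀ q ∈ T, (N.isRetCherry q.1 q.2 ∨ (N.isCherry q.1 q.2 ∧ q.1 < q.2)) ∧
        (l = q.1 ∨ l = q.2) ∧ q.1 ≠ q.2 := by
      intro q hq
      rw [hT, Finset.mem_filter] at hq
      obtain ⟨-, -, hne, hr⟩ := hmem q hq.1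
      exact ⟨hr, hq.2, hne⟩
    by_cases hA : ∃ p ∈ T, N.isCherry p.1 p.2
    · -- cherry case: T ⊆ {p}
      obtain ⟨p, hpT, hpc⟩ := hA
      -- no element of T is a reticulated cherry
      have hnorc : ∀ q ∈ T, ¬ N.isRetCherry q.1 q.2 := by
        intro q hq hqrc
        obtain ⟨-, hql, -⟩ := hTmem q hq
        obtain ⟨-, hpl, -⟩ := hTmem p hpT
        -- l is in a cherry
        have hcl : ∃ m, N.isCherry l m := by
          rcases hpl with h | h
          · exact ⟨p.2, h ▸ hpc⟩
          · exact ⟨p.1, h ▸ ARPAux.cherry_symm hpc⟩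
        obtain ⟨m, hm⟩ := hcl
        rcases hql with h | h
        · exact ARPAux.not_cherry_and_rc1 hph hm (h ▸ hqrc)
        · exact ARPAux.not_cherry_and_rc2 hph hm (h ▸ hqrc)
      have hTsub : T ⊆ {p} := by
        intro q hq
        obtain ⟨hqr, hql, hqne⟩ := hTmem q hq
        obtain ⟨hpr, hpl, hpne⟩ := hTmem p hpT
        have hqc : N.isCherry q.1 q.2 ∧ q.1 < q.2 := by
          rcases hqr with h | h
          · exact absurd h (hnorc q hq)
          · exact h
        have hpc' : N.isCherry p.1 p.2 ∧ p.1 < p.2 := by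
          rcases hpr with h | h
          · exact absurd h (hnorc p hpT)
          · exact h
        have hq1 : N.isCherry q.1 q.2 := hqc.1
        rw [Finset.mem_singleton]
        rcases hpl with hp1 | hp2 <;> rcases hql with hq1' | hq2'
        · -- l = p.1, l = q.1
          have := ARPAux.cherry_partner_unique hph (hq1' ▸ hq1) (hp1 ▸ hpc)
          exact Prod.ext_iff.mpr ⟨hq1'.symm.trans hp1, this⟩
        · -- l = p.1, l = q.2
          have := ARPAux.cherry_partner_unique hph
            (hq2' ▸ ARPAux.cherry_symm hq1) (hp1 ▸ hpc)
          -- q = (m, l), p = (l, m): q.1 = p.2, q.2 = p.1, order contradiction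
          have h1 : q.1 = p.2 := this
          have h2 : q.2 = p.1 := hq2'.symm.trans hp1
          have := hqc.2; have := hpc'.2; omega
        · have := ARPAux.cherry_partner_unique hph (hq1' ▸ hq1)
            (hp2 ▸ ARPAux.cherry_symm hpc)
          have h1 : q.2 = p.1 := this
          have h2 : q.1 = p.2 := hq1'.symm.trans hp2
          have := hqc.2; have := hpc'.2; omega
        · have := ARPAux.cherry_partner_unique hph
            (hq2' ▸ ARPAux.cherry_symm hq1) (hp2 ▸ ARPAux.cherry_symm hpc)
          exact Prod.ext_iff.mpr ⟨this, hq2'.symm.trans hp2⟩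
      calc ∑ p ∈ T, ARPAux.charge N p l ≤ ∑ q ∈ {p}, ARPAux.charge N q l :=
            Finset.sum_le_sum_of_subset hTsub
        _ = ARPAux.charge N p l := Finset.sum_singleton _ _
        _ ≤ 4 := ARPAux.charge_le N p l
    · push_neg at hA
      have hTrc : ∀ q ∈ T, N.isRetCherry q.1 q.2 := by
        intro q hq
        rcases (hTmem q hq).1 with h | h
        · exact h
        · exact absurd h.1 (hA q hq)
      by_cases hB : ∃ p ∈ T, l = p.2
      · obtain ⟨p, hpT, hpl⟩ := hB
        have hprc := hTrc p hpT
        have hTsub : T ⊆ {p} := by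
          intro q hq
          have hqrc := hTrc q hq
          obtain ⟨-, hql, hqne⟩ := hTmem q hq
          rw [Finset.mem_singleton]
          rcases hql with h | h
          · exact (ARPAux.not_rc1_and_rc2 (h ▸ hqrc) (hpl ▸ hprc)).elim
          · have := ARPAux.rc_snd_unique hph (h ▸ hqrc) (hpl ▸ hprc)
            exact Prod.ext_iff.mpr ⟨this, h.symm.trans hpl⟩
        calc ∑ p ∈ T, ARPAux.charge N p l ≤ ∑ q ∈ {p}, ARPAux.charge N q l :=
              Finset.sum_le_sum_of_subset hTsub
          _ = ARPAux.charge N p l := Finset.sum_singleton _ _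
          _ ≤ 4 := ARPAux.charge_le N p l
      · push_neg at hB
        have hfst : ∀ q ∈ T, l = q.1 := by
          intro q hq
          rcases (hTmem q hq).2.1 with h | h
          · exact h
          · exact absurd h (hB q hq)
        have hch : ∀ q ∈ T, ARPAux.charge N q l = 2 := by
          intro q hq
          unfold ARPAux.charge
          rw [if_neg (hA q hq), if_pos (hfst q hq)]
        have hcard : T.card ≤ 2 := by
          by_contra hcon
          push_neg at hcon
          obtain ⟨q1, hq1, q2, hq2, q3, hq3, h12, h13, h23⟩ :=
            Finset.two_lt_card.mp hcon
          have hr1 := hTrc q1 hq1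
          have hr2 := hTrc q2 hq2
          have hr3 := hTrc q3 hq3
          have e1 := hfst q1 hq1
          have e2 := hfst q2 hq2
          have e3 := hfst q3 hq3
          rcases ARPAux.rc_fst_two hph (e1 ▸ hr1) (e2 ▸ hr2) (e3 ▸ hr3)
            with h | h | h
          · exact h12 (Prod.ext_iff.mpr ⟨e1.symm.trans e2, h⟩)
          · exact h13 (Prod.ext_iff.mpr ⟨e1.symm.trans e3, h⟩)
          · exact h23 (Prod.ext_iff.mpr ⟨e2.symm.trans e3, h⟩)
        calc ∑ p ∈ T, ARPAux.charge N p l = ∑ p ∈ T, 2 :=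
              Finset.sum_congr rfl hch
          _ = T.card * 2 := by rw [Finset.sum_const, smul_eq_mul]
          _ ≤ 4 := by omega
  have key : 6 * P.card ≤ 4 * N.leaves.card := by
    calc 6 * P.card = ∑ p ∈ P, 6 := by
          rw [Finset.sum_const, smul_eq_mul, mul_comm]
      _ = ∑ p ∈ P, ∑ l ∈ N.leaves, ARPAux.charge N p l :=
          (Finset.sum_congr rfl hrow).symm
      _ = ∑ l ∈ N.leaves, ∑ p ∈ P, ARPAux.charge N p l := Finset.sum_comm
      _ ≤ ∑ l ∈ N.leaves, 4 := Finset.sum_le_sum hcol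
      _ = 4 * N.leaves.card := by rw [Finset.sum_const, smul_eq_mul, mul_comm]
  omega
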